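/- Assume the setup for induced HNN sequences: {G_i, λ_i} is an inverse sequence of groups, for each i there are subgroups H_i, H_i′ ≤ G_i and an isomorphism φ_i : H_i → H_i′, and for each i ≥ 1 one has λ_i(H_i) ⊆ H_{i−1}, λ_i(H_i′) ⊆ H_{i−1}′, and φ_{i−1}(λ_i(h)) = λ_i(φ_i(h)) for all h ∈ H_i. If the base sequence {G_i, λ_i} is semistable, then the induced HNN sequence {G_i∗_{φ_i}, λ̄_i} is semistable. -/
import Mathlib



universe u

/-- The composite bonding homomorphism `λ_{i,j} : G_j →* G_i` of an inverse sequence of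
groups, for `i ≤ j`. -/
def invSeqComp {G : ℕ → Type u} [∀ i, Group (G i)] (lam : ∀ i, G (i + 1) →* G i)
    {i j : ℕ} (h : i ≤ j) : G j →* G i :=
  Nat.leRecOn h (fun {k} f => f.comp (lam k)) (MonoidHom.id (G i))

/-- An inverse sequence of groups is **pro-monomorphic** if there exists `i` such that for
every `j ≥ i` there exists `k₀ ≥ j` with `ker (λ_{i,k}) = ker (λ_{j,k})` for all `k ≥ k₀`. -/
def ProMono {G : ℕ → Type u} [∀ i, Group (G i)] (lam : ∀ i, G (i + 1) →* G i) : Prop :=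
  ∃ i : ℕ, ∀ j : ℕ, ∀ hij : i ≤ j, ∃ k₀ : ℕ, ∃ hjk₀ : j ≤ k₀, ∀ k : ℕ, ∀ hk₀k : k₀ ≤ k,
    (invSeqComp lam (hij.trans (hjk₀.trans hk₀k))).ker =
      (invSeqComp lam (hjk₀.trans hk₀k)).ker

/-- An inverse sequence of groups is **semistable** (Mittag-Leffler) if for every `i` there
exists `j ≥ i` such that `Im (λ_{i,k}) = Im (λ_{i,j})` for all `k ≥ j`. -/
def Semistable {G : ℕ → Type u} [∀ i, Group (G i)] (lam : ∀ i, G (i + 1) →* G i) : Prop :=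
  ∀ i : ℕ, ∃ j : ℕ, ∃ hij : i ≤ j, ∀ k : ℕ, ∀ hjk : j ≤ k,
    (invSeqComp lam (hij.trans hjk)).range = (invSeqComp lam hij).range

/-- An inverse sequence of groups is **stable** if it is pro-monomorphic and semistable. -/
def Stable {G : ℕ → Type u} [∀ i, Group (G i)] (lam : ∀ i, G (i + 1) →* G i) : Prop :=
  ProMono lam ∧ Semistable lam

lemma invSeqComp_self {G : ℕ → Type u} [∀ i, Group (G i)] (lam : ∀ i, G (i + 1) →* G i)
    {i : ℕ} (h : i ≤ i) : invSeqComp lam h = MonoidHom.id (G i) := by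
  simp [invSeqComp, Nat.leRecOn_self]

lemma invSeqComp_succ {G : ℕ → Type u} [∀ i, Group (G i)] (lam : ∀ i, G (i + 1) →* G i)
    {i j : ℕ} (h : i ≤ j) (h' : i ≤ j + 1) :
    invSeqComp lam h' = (invSeqComp lam h).comp (lam j) := by
  simp [invSeqComp, Nat.leRecOn_succ h]

/-- In the setup for induced HNN sequences, if the base sequence
`{G_i, λ_i}` is semistable, then the induced HNN sequence `{G_i∗_{φ_i}, λ̄_i}` is
semistable. -/
theorem induced_HNN_sequence_semistable_of_base_semistable
    {G : ℕ → Type u} [∀ i, Group (G i)] (lam : ∀ i, G (i + 1) →* G i)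
    (H H' : ∀ i, Subgroup (G i)) (φ : ∀ i, H i ≃* H' i)
    (hH : ∀ i, ∀ h ∈ H (i + 1), lam i h ∈ H i)
    (hH' : ∀ i, ∀ h ∈ H' (i + 1), lam i h ∈ H' i)
    (hcomp : ∀ i (h : H (i + 1)) (hm : lam i (h : G (i + 1)) ∈ H i),
      ((φ i) ⟨lam i (h : G (i + 1)), hm⟩ : G i) = lam i ((φ (i + 1)) h))
    (lamBar : ∀ i, HNNExtension (G (i + 1)) (H (i + 1)) (H' (i + 1)) (φ (i + 1)) →*
      HNNExtension (G i) (H i) (H' i) (φ i))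
    (hBarOf : ∀ i (g : G (i + 1)), lamBar i (HNNExtension.of g) = HNNExtension.of (lam i g))
    (hBarT : ∀ i, lamBar i HNNExtension.t = HNNExtension.t) :
    Semistable lam → Semistable (G := fun i => HNNExtension (G i) (H i) (H' i) (φ i)) lamBar := by

  intro hss i
  -- transported commutation facts for composites
  have key : ∀ j (hij : i ≤ j),
      (∀ g : G j, invSeqComp (G := fun i => HNNExtension (G i) (H i) (H' i) (φ i)) lamBar hij
          (HNNExtension.of g) = HNNExtension.of (invSeqComp lam hij g)) ∧
      invSeqComp (G := fun i => HNNExtension (G i) (H i) (H' i) (φ i)) lamBar hij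
          HNNExtension.t = HNNExtension.t := by
    intro j hij
    induction j, hij using Nat.le_induction with
    | base =>
      rw [invSeqComp_self, invSeqComp_self]
      exact ⟨fun g => rfl, rfl⟩
    | succ j hij ih =>
      rw [invSeqComp_succ (G := fun i => HNNExtension (G i) (H i) (H' i) (φ i)) lamBar hij, invSeqComp_succ lam hij]
      refine ⟨fun g => ?_, ?_⟩
      · simp only [MonoidHom.comp_apply, hBarOf j g, ih.1]
      · simp only [MonoidHom.comp_apply, hBarT j, ih.2]
  -- range of a composite in the HNN sequence is the closure of of-image of base range with t
  have hrange : ∀ j (hij : i ≤ j),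
      (invSeqComp (G := fun i => HNNExtension (G i) (H i) (H' i) (φ i)) lamBar hij).range =
        Subgroup.closure ((HNNExtension.of '' ((invSeqComp lam hij).range : Set (G i))) ∪
          {HNNExtension.t}) := by
    intro j hij
    apply le_antisymm
    · rintro x ⟨y, rfl⟩
      induction y using HNNExtension.induction_on with
      | of g =>
        rw [(key j hij).1 g]
        exact Subgroup.subset_closure (Or.inl ⟨_, ⟨g, rfl⟩, rfl⟩)
      | t =>
        rw [(key j hij).2]
        exact Subgroup.subset_closure (Or.inr rfl)
      | mul a b ha hb => rw [map_mul]; exact mul_mem ha hb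
      | inv a ha => rw [map_inv]; exact inv_mem ha
    · rw [Subgroup.closure_le]
      rintro x (⟨g, ⟨g', rfl⟩, rfl⟩ | rfl)
      · exact ⟨HNNExtension.of g', (key j hij).1 g'⟩
      · exact ⟨HNNExtension.t, (key j hij).2⟩
  obtain ⟨j, hij, hj⟩ := hss i
  refine ⟨j, hij, fun k hjk => ?_⟩
  rw [hrange k (hij.trans hjk), hrange j hij, hj k hjk]
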